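/- Let k ≥ 2, let {μ_1,…,μ_k} be a BCD(ρ) family on a finite sample space Ω ⊆ {−1,1}^k centered around μ_0, let n ≥ 1, and assume ρ ≤ 1/(2√n·(2√(2·ln(8k²)) + 3)). Let α be the unique number with 0 < α ≤ 1/2 satisfying α = (2√(2·ln(2k²/α²)) + 3)·ρ·√n, and let 𝒯 ⊆ Ω^n be the set of all x such that |μ_i^n(x)/μ_0^n(x) − 1| ≤ α for every i ∈ [k]. Then for every i' ∈ {0,1,…,k}, μ_{i'}^n(Ω^n \ 𝒯) ≤ α²/k. -/

import Mathlib

open Finset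

noncomputable section

/-- `p` is a probability distribution on the finite set `Ω`. -/
def IsDist {Ω : Type*} [Fintype Ω] (p : Ω → ℝ) : Prop :=
  (∀ x, 0 ≤ p x) ∧ ∑ x, p x = 1

/-- The distribution of `n` i.i.d. samples from `p`. -/
def prodDist {Ω : Type*} [Fintype Ω] (p : Ω → ℝ) (n : ℕ) : (Fin n → Ω) → ℝ :=
  fun x => ∏ j, p (x j)

/-- Hoeffding's lemma for a ±1-valued random variable. -/
lemma hoeff_pm (p q s : ℝ) (hp : 0 ≤ p) (hq : 0 ≤ q) (hpq : p + q = 1) :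
    p * Real.exp s + q * Real.exp (-s) ≤ Real.exp (s * (p - q) + s ^ 2 / 2) := by
  set m := p - q with hm
  set φ : ℝ → ℝ := fun u => p * Real.exp u + q * Real.exp (-u) with hφ
  set ψ : ℝ → ℝ := fun u => p * Real.exp u - q * Real.exp (-u) with hψ
  have hφpos : ∀ u, 0 < φ u := by
    intro u
    have h1 : Real.exp (-|u|) ≤ Real.exp u := Real.exp_le_exp.mpr (neg_abs_le u)
    have h2 : Real.exp (-|u|) ≤ Real.exp (-u) := Real.exp_le_exp.mpr (by
      simpa using neg_abs_le (-u))
    have h3 : 0 < Real.exp (-|u|) := Real.exp_pos _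
    have : Real.exp (-|u|) ≤ φ u := by
      calc Real.exp (-|u|) = p * Real.exp (-|u|) + q * Real.exp (-|u|) := by
            rw [← add_mul, hpq, one_mul]
        _ ≤ φ u := by
            simp only [hφ]
            gcongr
    linarith
  have hφd : ∀ u, HasDerivAt φ (ψ u) u := by
    intro u
    have h1 : HasDerivAt (fun x : ℝ => Real.exp x) (Real.exp u) u := Real.hasDerivAt_exp u
    have h2 : HasDerivAt (fun x : ℝ => Real.exp (-x)) (-Real.exp (-u)) u := by
      exact ((Real.hasDerivAt_exp (-u)).comp u (hasDerivAt_neg u)).congr_deriv (by ring)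
    exact ((h1.const_mul p).add (h2.const_mul q)).congr_deriv (by simp only [hψ]; ring)
  have hψd : ∀ u, HasDerivAt ψ (φ u) u := by
    intro u
    have h1 : HasDerivAt (fun x : ℝ => Real.exp x) (Real.exp u) u := Real.hasDerivAt_exp u
    have h2 : HasDerivAt (fun x : ℝ => Real.exp (-x)) (-Real.exp (-u)) u := by
      exact ((Real.hasDerivAt_exp (-u)).comp u (hasDerivAt_neg u)).congr_deriv (by ring)
    exact ((h1.const_mul p).sub (h2.const_mul q)).congr_deriv (by simp only [hφ]; ring)
  set D : ℝ → ℝ := fun u => m + u - ψ u / φ u with hD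
  have hDd : ∀ u, HasDerivAt D (1 - (φ u * φ u - ψ u * ψ u) / (φ u) ^ 2) u := by
    intro u
    have h1 : HasDerivAt (fun x => ψ x / φ x)
        ((φ u * φ u - ψ u * ψ u) / (φ u) ^ 2) u := (hψd u).div (hφd u) (hφpos u).ne'
    exact (((hasDerivAt_const u m).add (hasDerivAt_id u)).sub h1).congr_deriv (by ring)
  have hD' : ∀ u, 0 ≤ 1 - (φ u * φ u - ψ u * ψ u) / (φ u) ^ 2 := by
    intro u
    have h0 := (hφpos u).ne'
    have : 1 - (φ u * φ u - ψ u * ψ u) / (φ u) ^ 2 = (ψ u / φ u) ^ 2 := by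
      field_simp
      ring
    rw [this]
    positivity
  have hDmono : Monotone D := by
    apply monotone_of_deriv_nonneg
    · exact fun u => (hDd u).differentiableAt
    · intro u
      rw [(hDd u).deriv]
      exact hD' u
  have hD0 : D 0 = 0 := by
    simp [hD, hφ, hψ, hpq, hm]
  set F : ℝ → ℝ := fun u => u * m + u ^ 2 / 2 - Real.log (φ u) with hF
  have hFd : ∀ u, HasDerivAt F (D u) u := by
    intro u
    have h1 : HasDerivAt (fun x : ℝ => x * m + x ^ 2 / 2) (m + u) u := by
      have := ((hasDerivAt_id u).mul_const m).add
        (((hasDerivAt_pow 2 u)).div_const 2)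
      exact this.congr_deriv (by push_cast; ring)
    have h2 : HasDerivAt (fun x => Real.log (φ x)) (ψ u / φ u) u :=
      (hφd u).log (hφpos u).ne'
    exact h1.sub h2
  have hF0 : F 0 = 0 := by
    simp [hF, hφ, hpq]
  have hFs : 0 ≤ F s := by
    rcases le_total 0 s with hs | hs
    · have hmono : MonotoneOn F (Set.Ici 0) := by
        apply monotoneOn_of_deriv_nonneg (convex_Ici 0)
        · exact (Differentiable.continuous (fun u => (hFd u).differentiableAt)).continuousOn
        · exact fun u _ => (hFd u).differentiableAt.differentiableWithinAt
        · intro u hu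
          rw [(hFd u).deriv]
          have : D 0 ≤ D u := hDmono (le_of_lt (by simpa using hu))
          linarith [hD0 ▸ this]
      have := hmono (Set.self_mem_Ici) (Set.mem_Ici.mpr hs) hs
      linarith [hF0 ▸ this]
    · have hmono : AntitoneOn F (Set.Iic 0) := by
        apply antitoneOn_of_deriv_nonpos (convex_Iic 0)
        · exact (Differentiable.continuous (fun u => (hFd u).differentiableAt)).continuousOn
        · exact fun u _ => (hFd u).differentiableAt.differentiableWithinAt
        · intro u hu
          rw [(hFd u).deriv]
          have : D u ≤ D 0 := hDmono (le_of_lt (by simpa using hu))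
          linarith [hD0 ▸ this]
      have := hmono (Set.mem_Iic.mpr hs) (Set.self_mem_Iic) hs
      linarith [hF0 ▸ this]
  have : Real.log (φ s) ≤ s * m + s ^ 2 / 2 := by
    simp only [hF] at hFs; linarith
  have := (Real.log_le_iff_le_exp (hφpos s)).mp this
  simpa [hφ, hm] using this

/-- Chernoff–Hoeffding tail bound for i.i.d. ±1-valued samples. -/
lemma chernoff {Ω' : Type*} [Fintype Ω'] (μ : Ω' → ℝ) (h0 : ∀ y, 0 ≤ μ y)
    (h1 : ∑ y, μ y = 1) (g : Ω' → ℝ) (hg : ∀ y, g y = 1 ∨ g y = -1)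
    (m : ℝ) (hm : ∑ y, μ y * g y = m) (n : ℕ) (hn : 1 ≤ n) (t : ℝ) (ht : 0 ≤ t) :
    ∑ x : Fin n → Ω', (if (n : ℝ) * m + t ≤ ∑ j, g (x j) then prodDist μ n x else 0)
      ≤ Real.exp (-t ^ 2 / (2 * n)) := by
  have hn0 : (0 : ℝ) < n := by exact_mod_cast Nat.lt_of_lt_of_le Nat.zero_lt_one hn
  set s := t / n with hs
  have hs0 : 0 ≤ s := div_nonneg ht hn0.le
  -- the MGF bound for a single sample
  have hmgf : ∑ y, μ y * Real.exp (s * (g y - m)) ≤ Real.exp (s ^ 2 / 2) := by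
    have hpt : ∀ y, μ y * Real.exp (s * (g y - m)) =
        Real.exp (-(s * m)) * ((μ y * ((1 + g y) / 2)) * Real.exp s
          + (μ y * ((1 - g y) / 2)) * Real.exp (-s)) := by
      intro y
      rcases hg y with h | h
      · have e1 : Real.exp (-(s * m)) * Real.exp s = Real.exp (s * (1 - m)) := by
          rw [← Real.exp_add]; ring_nf
        rw [h]
        calc μ y * Real.exp (s * (1 - m))
            = μ y * (Real.exp (-(s * m)) * Real.exp s) := by rw [e1]
          _ = Real.exp (-(s * m)) * ((μ y * ((1 + 1) / 2)) * Real.exp s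
              + (μ y * ((1 - 1) / 2)) * Real.exp (-s)) := by ring
      · have e1 : Real.exp (-(s * m)) * Real.exp (-s) = Real.exp (s * (-1 - m)) := by
          rw [← Real.exp_add]; ring_nf
        rw [h]
        calc μ y * Real.exp (s * (-1 - m))
            = μ y * (Real.exp (-(s * m)) * Real.exp (-s)) := by rw [e1]
          _ = Real.exp (-(s * m)) * ((μ y * ((1 + -1) / 2)) * Real.exp s
              + (μ y * ((1 - -1) / 2)) * Real.exp (-s)) := by ring
    rw [Finset.sum_congr rfl (fun y _ => hpt y), ← Finset.mul_sum]
    have hsum : ∑ y, ((μ y * ((1 + g y) / 2)) * Real.exp s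
        + (μ y * ((1 - g y) / 2)) * Real.exp (-s))
        = ((1 + m) / 2) * Real.exp s + ((1 - m) / 2) * Real.exp (-s) := by
      have e2 : ∀ y, (μ y * ((1 + g y) / 2)) * Real.exp s
          + (μ y * ((1 - g y) / 2)) * Real.exp (-s)
          = (μ y / 2 + (μ y * g y) / 2) * Real.exp s
            + (μ y / 2 - (μ y * g y) / 2) * Real.exp (-s) := fun y => by ring
      rw [Finset.sum_congr rfl (fun y _ => e2 y), Finset.sum_add_distrib,
        ← Finset.sum_mul, ← Finset.sum_mul, Finset.sum_add_distrib,
        Finset.sum_sub_distrib, ← Finset.sum_div, ← Finset.sum_div, h1, hm]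
      ring
    rw [hsum]
    have hm1 : |m| ≤ 1 := by
      rw [← hm]
      calc |∑ y, μ y * g y| ≤ ∑ y, |μ y * g y| := Finset.abs_sum_le_sum_abs _ _
        _ = ∑ y, μ y := by
            apply Finset.sum_congr rfl
            intro y _
            rcases hg y with h | h <;> rw [abs_mul, h] <;>
              simp [abs_of_nonneg (h0 y)]
        _ = 1 := h1
    rw [abs_le] at hm1
    calc Real.exp (-(s * m)) * (((1 + m) / 2) * Real.exp s + ((1 - m) / 2) * Real.exp (-s))
        ≤ Real.exp (-(s * m)) * Real.exp (s * ((1 + m) / 2 - (1 - m) / 2) + s ^ 2 / 2) := by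
          apply mul_le_mul_of_nonneg_left _ (Real.exp_pos _).le
          exact hoeff_pm _ _ s (by linarith [hm1.1]) (by linarith [hm1.2]) (by ring)
      _ = Real.exp (s ^ 2 / 2) := by rw [← Real.exp_add]; congr 1; ring
  -- pointwise exponential bound
  have hpw : ∀ x : Fin n → Ω',
      (if (n : ℝ) * m + t ≤ ∑ j, g (x j) then prodDist μ n x else 0)
      ≤ Real.exp (-(s * t)) * ∏ j, (μ (x j) * Real.exp (s * (g (x j) - m))) := by
    intro x
    have hprod0 : 0 ≤ prodDist μ n x := Finset.prod_nonneg (fun j _ => h0 _)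
    have hRHS : Real.exp (-(s * t)) * ∏ j, (μ (x j) * Real.exp (s * (g (x j) - m)))
        = prodDist μ n x * Real.exp (s * ((∑ j, g (x j)) - (n : ℝ) * m) - s * t) := by
      rw [Finset.prod_mul_distrib, ← Real.exp_sum]
      have e3 : ∑ j, s * (g (x j) - m) = s * ((∑ j, g (x j)) - (n : ℝ) * m) := by
        simp only [mul_sub]
        rw [Finset.sum_sub_distrib, Finset.sum_const, Finset.card_univ, Fintype.card_fin,
          Finset.mul_sum]
        rw [nsmul_eq_mul]
        ring
      rw [e3]
      have e4 : Real.exp (s * ((∑ j, g (x j)) - (n : ℝ) * m) - s * t)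
          = Real.exp (s * ((∑ j, g (x j)) - (n : ℝ) * m)) * Real.exp (-(s * t)) := by
        rw [← Real.exp_add]; ring_nf
      rw [e4]
      unfold prodDist
      ring
    rw [hRHS]
    split_ifs with h
    · apply le_mul_of_one_le_right hprod0
      apply Real.one_le_exp
      have h2 : s * t ≤ s * ((∑ j, g (x j)) - (n : ℝ) * m) :=
        mul_le_mul_of_nonneg_left (by linarith) hs0
      linarith
    · positivity
  -- sum the bound and factor the product
  calc ∑ x : Fin n → Ω', (if (n : ℝ) * m + t ≤ ∑ j, g (x j) then prodDist μ n x else 0)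
      ≤ ∑ x : Fin n → Ω',
          Real.exp (-(s * t)) * ∏ j, (μ (x j) * Real.exp (s * (g (x j) - m))) :=
        Finset.sum_le_sum (fun x _ => hpw x)
    _ = Real.exp (-(s * t)) * (∑ y, μ y * Real.exp (s * (g y - m))) ^ n := by
        rw [← Finset.mul_sum]
        congr 1
        have := Finset.prod_univ_sum (fun _ : Fin n => (Finset.univ : Finset Ω'))
          (fun _ y => μ y * Real.exp (s * (g y - m)))
        rw [Finset.prod_const, Finset.card_univ, Fintype.card_fin,
          Fintype.piFinset_univ] at this
        exact this.symm
    _ ≤ Real.exp (-(s * t)) * (Real.exp (s ^ 2 / 2)) ^ n := by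
        apply mul_le_mul_of_nonneg_left _ (Real.exp_pos _).le
        apply pow_le_pow_left₀ _ hmgf
        exact Finset.sum_nonneg (fun y _ => mul_nonneg (h0 y) (Real.exp_pos _).le)
    _ = Real.exp (-t ^ 2 / (2 * n)) := by
        rw [← Real.exp_nat_mul, ← Real.exp_add]
        congr 1
        rw [hs]
        field_simp
        ring

set_option maxHeartbeats 2000000 in
/-- for a BCD(ρ) family and `α` as in the fixed-point equation,
the set `𝒯 = {x : ∀ i, |μ_i^n(x)/μ_0^n(x) − 1| ≤ α}` satisfies
`μ_{i'}^n(𝒯ᶜ) ≤ α²/k` for every `i' ∈ {0,1,…,k}`. -/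
theorem statement5 (k : ℕ) (hk : 2 ≤ k)
    (Ω : Finset (Fin k → ℝ)) (hΩ : ∀ x ∈ Ω, ∀ i, x i = 1 ∨ x i = -1)
    (μ₀ : ↥Ω → ℝ) (μ : Fin k → ↥Ω → ℝ) (ρ : ℝ)
    (hdist : IsDist μ₀)
    (hhalf : ∀ i : Fin k, ∑ x : ↥Ω, (if x.1 i = 1 then μ₀ x else 0) = 1/2)
    (hμ : ∀ i x, μ i x = (1 + ρ * x.1 i) * μ₀ x)
    (hρ0 : 0 < ρ) (hρ1 : ρ < 1)
    (n : ℕ) (hn : 1 ≤ n)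
    (hρle : ρ ≤ 1 / (2 * Real.sqrt n *
      (2 * Real.sqrt (2 * Real.log (8 * (k : ℝ)^2)) + 3)))
    (α : ℝ) (hα0 : 0 < α) (hα2 : α ≤ 1/2)
    (hαeq : α = (2 * Real.sqrt (2 * Real.log (2 * (k : ℝ)^2 / α^2)) + 3) * ρ * Real.sqrt n)
    (ν : (Fin n → ↥Ω) → ℝ)
    (hν : ν = prodDist μ₀ n ∨ ∃ i : Fin k, ν = prodDist (μ i) n) :
    (∑ x : Fin n → ↥Ω,
        if ¬ (∀ i : Fin k, |prodDist (μ i) n x / prodDist μ₀ n x - 1| ≤ α)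
        then ν x else 0)
      ≤ α^2 / k := by
  classical
  clear hρle
  have hk2 : (2:ℝ) ≤ (k:ℝ) := by exact_mod_cast hk
  have hk0 : (0:ℝ) < k := by linarith
  have hμ0 := hdist.1
  have hμ0sum := hdist.2
  have hf : ∀ (i : Fin k) (y : ↥Ω), (y.1 i : ℝ) = 1 ∨ (y.1 i : ℝ) = -1 :=
    fun i y => hΩ y.1 y.2 i
  -- constants
  set L := Real.log (2 * (k:ℝ)^2 / α^2) with hLdef
  set E := α^2/(2*(k:ℝ)^2) with hEdef
  have hEpos : 0 < E := by rw [hEdef]; positivity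
  have hexpL : Real.exp (-L) = E := by
    rw [hLdef, Real.exp_neg, Real.exp_log (by positivity), hEdef, inv_div]
  have hE16 : E ≤ 1/16 := by
    rw [hEdef, div_le_iff₀ (by positivity)]
    nlinarith only [hα0, hα2, hk2]
  have hL0 : 0 ≤ L := by
    by_contra h
    push_neg at h
    have h2 : (1:ℝ) < Real.exp (-L) := by
      rw [← Real.exp_zero]; exact Real.exp_lt_exp.mpr (by linarith)
    rw [hexpL] at h2; linarith
  set c := Real.exp (-(L/4)) with hcdef
  have hcpos : 0 < c := Real.exp_pos _
  have hc12 : c ≤ 1/2 := by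
    have h4 : c^4 = Real.exp (-L) := by
      rw [hcdef, ← Real.exp_nat_mul]; congr 1; push_cast; ring
    apply le_of_pow_le_pow_left₀ (n := 4) (by norm_num) (by norm_num : (0:ℝ) ≤ 1/2)
    rw [h4, hexpL]
    norm_num
    linarith [hE16]
  set t := Real.sqrt (5/2 * n * L) with htdef
  have ht0 : 0 ≤ t := Real.sqrt_nonneg _
  have hn0R : (0:ℝ) < n := by exact_mod_cast Nat.lt_of_lt_of_le Nat.zero_lt_one hn
  have htail : Real.exp (-t^2/(2*n)) = E * c := by
    have hsq : t^2 = 5/2 * n * L := Real.sq_sqrt (mul_nonneg (by positivity) hL0)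
    rw [hsq, ← hexpL, hcdef, ← Real.exp_add]
    congr 1
    field_simp
    ring
  have hsqnn : Real.sqrt n ^ 2 = (n:ℝ) := Real.sq_sqrt (Nat.cast_nonneg n)
  have hsqn1 : 1 ≤ Real.sqrt n := by
    rw [show (1:ℝ) = Real.sqrt 1 by simp]
    exact Real.sqrt_le_sqrt (by exact_mod_cast hn)
  have hρn : ρ * Real.sqrt n ≤ 1/6 := by
    have h1 : 3 * (ρ * Real.sqrt n) ≤ α := by
      rw [hαeq]
      nlinarith only [Real.sqrt_nonneg (2*L), mul_nonneg hρ0.le (Real.sqrt_nonneg (n:ℝ))]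
    linarith
  have hρ6 : ρ ≤ 1/6 := by nlinarith only [hρn, hsqn1, hρ0]
  -- log-linearization constants
  set a := (Real.log (1+ρ) + Real.log (1-ρ))/2 with hadef
  set b := (Real.log (1+ρ) - Real.log (1-ρ))/2 with hbdef
  have h1ρ : (0:ℝ) < 1 - ρ := by linarith
  have h1ρ' : (0:ℝ) < 1 + ρ := by linarith
  have hbpos : 0 < b := by
    have h1 := Real.log_pos (by linarith : (1:ℝ) < 1+ρ)
    have h2 := Real.log_neg h1ρ (by linarith : 1-ρ < 1)
    rw [hbdef]; linarith
  have hbρ : b ≤ 11/10*ρ := by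
    have h1 : Real.log (1+ρ) ≤ ρ := by
      linarith [Real.log_le_sub_one_of_pos h1ρ']
    have h2 : -Real.log (1-ρ) ≤ 6/5*ρ := by
      have h3 := Real.log_le_sub_one_of_pos (inv_pos.mpr h1ρ)
      rw [Real.log_inv] at h3
      have h4 : (1-ρ)⁻¹ ≤ 1 + 6/5*ρ := by
        rw [inv_eq_one_div, div_le_iff₀ h1ρ]
        nlinarith only [hρ0, hρ6]
      linarith
    rw [hbdef]; linarith
  have hprodpos : (0:ℝ) < (1+ρ)*(1-ρ) := mul_pos h1ρ' h1ρ
  have hlogm : Real.log (1+ρ) + Real.log (1-ρ) = Real.log ((1+ρ)*(1-ρ)) :=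
    (Real.log_mul h1ρ'.ne' h1ρ.ne').symm
  have ha0 : a ≤ 0 := by
    rw [hadef, hlogm]
    have := Real.log_nonpos (by nlinarith only [hρ0, hρ1]) (by nlinarith only [hρ0, hρ1] : (1+ρ)*(1-ρ) ≤ 1)
    linarith
  have halb : -(18/35*ρ^2) ≤ a := by
    have h3 := Real.log_le_sub_one_of_pos (inv_pos.mpr hprodpos)
    rw [Real.log_inv] at h3
    have h4 : ((1+ρ)*(1-ρ))⁻¹ ≤ 1 + 36/35*ρ^2 := by
      rw [inv_eq_one_div, div_le_iff₀ hprodpos]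
      have hρsq : ρ^2 ≤ 1/36 := by nlinarith only [hρ0, hρ6]
      nlinarith only [hρsq, sq_nonneg ρ, mul_nonneg (sq_nonneg ρ) (sub_nonneg.mpr hρsq)]
    rw [hadef, hlogm]
    linarith
  -- the key numeric inequality
  have hkey : ∀ m' : ℝ, 0 ≤ m' → m' ≤ ρ → (n:ℝ)*|a + b*m'| + b*t ≤ 2/3*α := by
    intro m' h0' h1'
    have habs : |a + b*m'| ≤ 113/70 * ρ^2 := by
      rw [abs_le]
      constructor
      · have h5 : 0 ≤ b*m' := mul_nonneg hbpos.le h0'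
        nlinarith only [halb, h5]
      · have h5 : b*m' ≤ 11/10*ρ*ρ := by nlinarith only [hbρ, hbpos.le, h0', h1', hρ0]
        nlinarith only [ha0, h5, hρ0]
    have h2 : (n:ℝ) * |a + b*m'| ≤ 2 * (ρ * Real.sqrt n) := by
      have habs0 : 0 ≤ |a + b*m'| := abs_nonneg _
      have s1 : (n:ℝ) * |a + b*m'| ≤ (n:ℝ) * (113/70 * ρ^2) :=
        mul_le_mul_of_nonneg_left habs (Nat.cast_nonneg n)
      have s2 : (n:ℝ) * (113/70 * ρ^2) = 113/70 * (ρ * Real.sqrt n)^2 := by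
        rw [mul_pow, hsqnn]; ring
      have s3 : (ρ * Real.sqrt n) * (ρ * Real.sqrt n) ≤ (ρ * Real.sqrt n) * (1/6) :=
        mul_le_mul_of_nonneg_left hρn
          (mul_nonneg hρ0.le (Real.sqrt_nonneg (n:ℝ)))
      have s4 : 0 ≤ ρ * Real.sqrt n := mul_nonneg hρ0.le (Real.sqrt_nonneg (n:ℝ))
      nlinarith only [s1, s2, s3, s4]
    have hsplit : t = Real.sqrt (5/2) * Real.sqrt n * Real.sqrt L := by
      rw [htdef, Real.sqrt_mul (by positivity : (0:ℝ) ≤ 5/2 * n),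
        Real.sqrt_mul (by norm_num : (0:ℝ) ≤ 5/2)]
    have hsq52 : Real.sqrt (5/2) ≤ 1582/1000 := by
      calc Real.sqrt (5/2) ≤ Real.sqrt ((1582/1000)^2) := Real.sqrt_le_sqrt (by norm_num)
        _ = 1582/1000 := Real.sqrt_sq (by norm_num)
    have hsq2 : (1414/1000 : ℝ) ≤ Real.sqrt 2 := by
      calc (1414/1000 : ℝ) = Real.sqrt ((1414/1000)^2) := (Real.sqrt_sq (by norm_num)).symm
        _ ≤ Real.sqrt 2 := Real.sqrt_le_sqrt (by norm_num)
    have hsqL0 : 0 ≤ Real.sqrt L := Real.sqrt_nonneg _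
    have hsqn0 : 0 ≤ Real.sqrt n := Real.sqrt_nonneg _
    have h3 : b * t ≤ (4/3) * (Real.sqrt 2 * Real.sqrt L) * (ρ * Real.sqrt n) := by
      have base : 0 ≤ ρ * Real.sqrt n * Real.sqrt L :=
        mul_nonneg (mul_nonneg hρ0.le hsqn0) hsqL0
      calc b * t = (b * Real.sqrt (5/2)) * (Real.sqrt n * Real.sqrt L) := by
            rw [hsplit]; ring
        _ ≤ ((11/10*ρ) * (1582/1000)) * (Real.sqrt n * Real.sqrt L) := by
            apply mul_le_mul_of_nonneg_right _ (mul_nonneg hsqn0 hsqL0)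
            exact mul_le_mul hbρ hsq52 (Real.sqrt_nonneg _) (by nlinarith only [hρ0])
        _ ≤ ((4/3)*(1414/1000)) * (ρ * Real.sqrt n * Real.sqrt L) := by
            nlinarith only [base]
        _ ≤ (4/3) * (Real.sqrt 2 * Real.sqrt L) * (ρ * Real.sqrt n) := by
            nlinarith only [hsq2, base]
    have hα' : 2/3*α = (4/3)*(Real.sqrt 2 * Real.sqrt L)*(ρ*Real.sqrt n)
        + 2*(ρ*Real.sqrt n) := by
      rw [hαeq, Real.sqrt_mul (by norm_num : (0:ℝ) ≤ 2) L]
      ring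
    linarith
  -- the exponential comparison
  have hup : Real.exp (2/3*α) ≤ 1 + α := by
    have h1 : (0:ℝ) < 1 - 2/3*α := by linarith
    have h3 := Real.add_one_le_exp (-(2/3*α))
    rw [Real.exp_neg] at h3
    have h4 : 0 < Real.exp (2/3*α) := Real.exp_pos _
    have h2 : Real.exp (2/3*α) ≤ (1 - 2/3*α)⁻¹ := by
      rw [← inv_inv (Real.exp (2/3*α))]
      apply inv_anti₀ h1
      linarith
    have h5 : (1 - 2/3*α)⁻¹ ≤ 1 + α := by
      rw [inv_eq_one_div, div_le_iff₀ h1]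
      nlinarith only [hα0, hα2]
    linarith
  -- ratio formula
  have hratio : ∀ (i : Fin k) (x : Fin n → ↥Ω),
      prodDist (μ i) n x
        = Real.exp ((n:ℝ)*a + b*(∑ j, ((x j).1 i : ℝ))) * prodDist μ₀ n x := by
    intro i x
    unfold prodDist
    have e1 : ∀ j : Fin n, μ i (x j) = Real.exp (a + b*((x j).1 i)) * μ₀ (x j) := by
      intro j
      rw [hμ]
      congr 1
      rcases hf i (x j) with h | h <;> rw [h]
      · have e : a + b*(1:ℝ) = Real.log (1+ρ) := by rw [hadef, hbdef]; ring
        rw [e, Real.exp_log h1ρ']; ring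
      · have e : a + b*(-1:ℝ) = Real.log (1-ρ) := by rw [hadef, hbdef]; ring
        rw [e, Real.exp_log h1ρ]; ring
    rw [Finset.prod_congr rfl (fun j _ => e1 j), Finset.prod_mul_distrib, ← Real.exp_sum]
    congr 2
    rw [Finset.sum_add_distrib, Finset.sum_const, Finset.card_univ, Fintype.card_fin,
      ← Finset.mul_sum, nsmul_eq_mul]
  -- event inclusion
  have hincl : ∀ (i : Fin k) (x : Fin n → ↥Ω) (m' : ℝ), 0 ≤ m' → m' ≤ ρ →
      prodDist μ₀ n x ≠ 0 →
      ¬ (|prodDist (μ i) n x / prodDist μ₀ n x - 1| ≤ α) →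
      ((n:ℝ)*m' + t ≤ ∑ j, ((x j).1 i : ℝ)
        ∨ (∑ j, ((x j).1 i : ℝ)) ≤ (n:ℝ)*m' - t) := by
    intro i x m' hm0 hmρ hz hbad
    set T := ∑ j, ((x j).1 i : ℝ) with hT
    have hr : prodDist (μ i) n x / prodDist μ₀ n x = Real.exp ((n:ℝ)*a + b*T) := by
      rw [hratio i x]
      rw [mul_div_assoc, div_self hz, mul_one]
    rw [hr] at hbad
    have hu : ¬ |(n:ℝ)*a + b*T| ≤ 2/3*α := by
      intro hc'
      apply hbad
      rw [abs_le] at hc' ⊢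
      constructor
      · have h9 := Real.add_one_le_exp ((n:ℝ)*a + b*T)
        linarith only [h9, hc'.1, hα0]
      · have h2 := Real.exp_le_exp.mpr hc'.2
        linarith [hup]
    rw [abs_le, not_and_or, not_le, not_le] at hu
    have hkey' := hkey m' hm0 hmρ
    have hn0' : (0:ℝ) ≤ n := Nat.cast_nonneg n
    have hA1 : (n:ℝ)*(a + b*m') ≤ (n:ℝ)*|a + b*m'| :=
      mul_le_mul_of_nonneg_left (le_abs_self _) hn0'
    have hA2 : -((n:ℝ)*|a + b*m'|) ≤ (n:ℝ)*(a + b*m') := by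
      have := mul_le_mul_of_nonneg_left (neg_abs_le (a + b*m')) hn0'
      linarith
    have hiden : b*(T - (n:ℝ)*m') = ((n:ℝ)*a + b*T) - (n:ℝ)*(a + b*m') := by ring
    rcases hu with h | h
    · right
      have h2 : b*(T - (n:ℝ)*m') < b*(-t) := by
        rw [hiden]
        linarith only [h, hA2, hkey']
      have := lt_of_mul_lt_mul_left h2 hbpos.le
      linarith
    · left
      have h2 : b*t < b*(T - (n:ℝ)*m') := by
        rw [hiden]
        linarith only [h, hA1, hkey']
      have := lt_of_mul_lt_mul_left h2 hbpos.le
      linarith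
  -- mean of the i-th coordinate
  have hmean0 : ∀ i : Fin k, ∑ y : ↥Ω, μ₀ y * ((y.1 i : ℝ)) = 0 := by
    intro i
    have e : ∀ y : ↥Ω, μ₀ y * ((y.1 i : ℝ))
        = 2*(if (y.1 i : ℝ) = 1 then μ₀ y else 0) - μ₀ y := by
      intro y
      rcases hf i y with h | h <;> rw [h] <;> norm_num
      all_goals ring
    rw [Finset.sum_congr rfl (fun y _ => e y), Finset.sum_sub_distrib,
      ← Finset.mul_sum, hhalf i, hμ0sum]
    norm_num
  have hμi0 : ∀ (i : Fin k) (y : ↥Ω), 0 ≤ μ i y := by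
    intro i y
    rw [hμ]
    apply mul_nonneg _ (hμ0 y)
    rcases hf i y with h | h <;> rw [h] <;> nlinarith only [hρ0, hρ1]
  have hμizero : ∀ (i : Fin k) (y : ↥Ω), μ₀ y = 0 → μ i y = 0 := by
    intro i y h
    rw [hμ, h, mul_zero]
  have hμisum : ∀ i : Fin k, ∑ y : ↥Ω, μ i y = 1 := by
    intro i
    have e : ∀ y : ↥Ω, μ i y = μ₀ y + ρ * (μ₀ y * (y.1 i)) := by
      intro y; rw [hμ]; ring
    rw [Finset.sum_congr rfl (fun y _ => e y), Finset.sum_add_distrib,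
      ← Finset.mul_sum, hmean0 i, hμ0sum]
    ring
  have hμimean : ∀ i : Fin k, ∑ y : ↥Ω, μ i y * ((y.1 i : ℝ)) = ρ := by
    intro i
    have e2 : ∀ y : ↥Ω, ((y.1 i : ℝ))*(y.1 i) = 1 := by
      intro y; rcases hf i y with h | h <;> rw [h] <;> norm_num
    calc ∑ y : ↥Ω, μ i y * ((y.1 i : ℝ))
        = ∑ y : ↥Ω, (μ₀ y * (y.1 i) + ρ * μ₀ y) := by
          apply Finset.sum_congr rfl
          intro y _
          rw [hμ]
          rw [show (1 + ρ * ((y.1 i : ℝ))) * μ₀ y * ((y.1 i : ℝ))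
              = μ₀ y * ((y.1 i : ℝ)) + ρ * μ₀ y * (((y.1 i : ℝ)) * ((y.1 i : ℝ))) from by
            ring, e2 y]
          ring
      _ = 0 + ρ * 1 := by
          rw [Finset.sum_add_distrib, hmean0 i, ← Finset.mul_sum, hμ0sum]
      _ = ρ := by ring
  -- the per-coordinate tail bound
  have tail : ∀ (i : Fin k) (w : ↥Ω → ℝ), (∀ y, 0 ≤ w y) → (∑ y, w y = 1) →
      ∀ m' : ℝ, 0 ≤ m' → m' ≤ ρ → (∑ y : ↥Ω, w y * ((y.1 i : ℝ)) = m') →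
      (∀ y, μ₀ y = 0 → w y = 0) →
      (∑ x : Fin n → ↥Ω, (if ¬ (|prodDist (μ i) n x / prodDist μ₀ n x - 1| ≤ α)
        then prodDist w n x else 0)) ≤ 2*(E*c) := by
    intro i w hw0 hw1 m' hm0 hmρ hmean hzero
    have hup' := chernoff w hw0 hw1 (fun y => ((y.1 i : ℝ))) (hf i) m' hmean n hn t ht0
    have hgneg : ∀ y : ↥Ω, -((y.1 i : ℝ)) = 1 ∨ -((y.1 i : ℝ)) = -1 := by
      intro y
      rcases hf i y with h | h
      · right; rw [h]
      · left; rw [h]; norm_num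
    have hmneg : ∑ y : ↥Ω, w y * (-((y.1 i : ℝ))) = -m' := by
      rw [← hmean, ← Finset.sum_neg_distrib]
      apply Finset.sum_congr rfl
      intro y _
      ring
    have hdown := chernoff w hw0 hw1 (fun y => -((y.1 i : ℝ))) hgneg (-m') hmneg n hn t ht0
    have pw : ∀ x : Fin n → ↥Ω,
        (if ¬ (|prodDist (μ i) n x / prodDist μ₀ n x - 1| ≤ α) then prodDist w n x else 0)
        ≤ (if (n:ℝ)*m' + t ≤ ∑ j, ((x j).1 i : ℝ) then prodDist w n x else 0)
          + (if (n:ℝ)*(-m') + t ≤ ∑ j, -((x j).1 i : ℝ) then prodDist w n x else 0) := by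
      intro x
      have hwx : 0 ≤ prodDist w n x := Finset.prod_nonneg (fun j _ => hw0 _)
      have e1 : 0 ≤ (if (n:ℝ)*m' + t ≤ ∑ j, ((x j).1 i : ℝ)
          then prodDist w n x else 0) := by
        split_ifs; exacts [hwx, le_rfl]
      have e2 : 0 ≤ (if (n:ℝ)*(-m') + t ≤ ∑ j, -((x j).1 i : ℝ)
          then prodDist w n x else 0) := by
        split_ifs; exacts [hwx, le_rfl]
      by_cases hbad : ¬ (|prodDist (μ i) n x / prodDist μ₀ n x - 1| ≤ α)
      · rw [if_pos hbad]
        by_cases hz : prodDist μ₀ n x = 0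
        · have hwz : prodDist w n x = 0 := by
            unfold prodDist at hz ⊢
            rw [Finset.prod_eq_zero_iff] at hz
            obtain ⟨j, _, hj⟩ := hz
            exact Finset.prod_eq_zero (Finset.mem_univ j) (hzero _ hj)
          rw [hwz]
          split_ifs <;> norm_num
        · rcases hincl i x m' hm0 hmρ hz hbad with h | h
          · rw [if_pos h]
            linarith
          · have h' : (n:ℝ)*(-m') + t ≤ ∑ j, -((x j).1 i : ℝ) := by
              rw [Finset.sum_neg_distrib]
              linarith
            rw [if_pos h']
            linarith
      · rw [if_neg hbad]
        linarith
    calc (∑ x : Fin n → ↥Ω, (if ¬ (|prodDist (μ i) n x / prodDist μ₀ n x - 1| ≤ α)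
          then prodDist w n x else 0))
        ≤ ∑ x : Fin n → ↥Ω,
            ((if (n:ℝ)*m' + t ≤ ∑ j, ((x j).1 i : ℝ) then prodDist w n x else 0)
            + (if (n:ℝ)*(-m') + t ≤ ∑ j, -((x j).1 i : ℝ) then prodDist w n x else 0)) :=
          Finset.sum_le_sum (fun x _ => pw x)
      _ = (∑ x : Fin n → ↥Ω, (if (n:ℝ)*m' + t ≤ ∑ j, ((x j).1 i : ℝ)
            then prodDist w n x else 0))
          + (∑ x : Fin n → ↥Ω, (if (n:ℝ)*(-m') + t ≤ ∑ j, -((x j).1 i : ℝ)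
            then prodDist w n x else 0)) := Finset.sum_add_distrib
      _ ≤ Real.exp (-t^2/(2*n)) + Real.exp (-t^2/(2*n)) := add_le_add hup' hdown
      _ = 2*(E*c) := by rw [htail]; ring
  -- final relation
  have hαk : α^2/(k:ℝ) = 2*(k:ℝ)*E := by
    rw [hEdef]
    field_simp
  -- nonnegativity of the per-i indicator terms
  have hind0 : ∀ (i : Fin k) (x : Fin n → ↥Ω) (w : (Fin n → ↥Ω) → ℝ), (0 ≤ w x) →
      0 ≤ (if ¬ (|prodDist (μ i) n x / prodDist μ₀ n x - 1| ≤ α) then w x else 0) := by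
    intro i x w hw
    split_ifs <;> first | exact hw | exact le_rfl
  rcases hν with hν0 | ⟨i', hνi⟩
  · -- case ν = μ₀^n
    subst hν0
    have pw : ∀ x : Fin n → ↥Ω,
        (if ¬ (∀ i : Fin k, |prodDist (μ i) n x / prodDist μ₀ n x - 1| ≤ α)
          then prodDist μ₀ n x else 0)
        ≤ ∑ i : Fin k, (if ¬ (|prodDist (μ i) n x / prodDist μ₀ n x - 1| ≤ α)
          then prodDist μ₀ n x else 0) := by
      intro x
      have hwx : 0 ≤ prodDist μ₀ n x := Finset.prod_nonneg (fun j _ => hμ0 _)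
      by_cases hB : ∀ i : Fin k, |prodDist (μ i) n x / prodDist μ₀ n x - 1| ≤ α
      · rw [if_neg (not_not_intro hB)]
        exact Finset.sum_nonneg (fun i _ => hind0 i x _ hwx)
      · rw [if_pos hB]
        push_neg at hB
        obtain ⟨i0, hi0⟩ := hB
        have h : (if ¬ (|prodDist (μ i0) n x / prodDist μ₀ n x - 1| ≤ α)
            then prodDist μ₀ n x else 0)
            ≤ ∑ i : Fin k, (if ¬ (|prodDist (μ i) n x / prodDist μ₀ n x - 1| ≤ α)
              then prodDist μ₀ n x else 0) :=
          Finset.single_le_sum (f := fun i => (if ¬ (|prodDist (μ i) n x / prodDist μ₀ n x - 1| ≤ α)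
            then prodDist μ₀ n x else 0))
            (fun i _ => hind0 i x _ hwx) (Finset.mem_univ i0)
        rw [if_pos (not_le.mpr hi0)] at h
        exact h
    calc (∑ x : Fin n → ↥Ω,
          (if ¬ (∀ i : Fin k, |prodDist (μ i) n x / prodDist μ₀ n x - 1| ≤ α)
            then prodDist μ₀ n x else 0))
        ≤ ∑ x : Fin n → ↥Ω, ∑ i : Fin k,
            (if ¬ (|prodDist (μ i) n x / prodDist μ₀ n x - 1| ≤ α)
              then prodDist μ₀ n x else 0) := Finset.sum_le_sum (fun x _ => pw x)
      _ = ∑ i : Fin k, ∑ x : Fin n → ↥Ω,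
            (if ¬ (|prodDist (μ i) n x / prodDist μ₀ n x - 1| ≤ α)
              then prodDist μ₀ n x else 0) := Finset.sum_comm
      _ ≤ ∑ _i : Fin k, 2*(E*c) :=
          Finset.sum_le_sum (fun i _ =>
            tail i μ₀ hμ0 hμ0sum 0 le_rfl hρ0.le (hmean0 i) (fun y h => h))
      _ = (k:ℝ) * (2*(E*c)) := by
          rw [Finset.sum_const, Finset.card_univ, Fintype.card_fin, nsmul_eq_mul]
      _ ≤ α^2/k := by
          rw [hαk]
          nlinarith only [hEpos, hc12, hcpos, hk0, mul_pos hk0 hEpos]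
  · -- case ν = μ_{i'}^n
    subst hνi
    have pw : ∀ x : Fin n → ↥Ω,
        (if ¬ (∀ i : Fin k, |prodDist (μ i) n x / prodDist μ₀ n x - 1| ≤ α)
          then prodDist (μ i') n x else 0)
        ≤ (if ¬ (|prodDist (μ i') n x / prodDist μ₀ n x - 1| ≤ α)
            then prodDist (μ i') n x else 0)
          + (3/2) * ∑ i ∈ Finset.univ.erase i',
              (if ¬ (|prodDist (μ i) n x / prodDist μ₀ n x - 1| ≤ α)
                then prodDist μ₀ n x else 0) := by
      intro x
      have hwx : 0 ≤ prodDist (μ i') n x := Finset.prod_nonneg (fun j _ => hμi0 i' _)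
      have h0x : 0 ≤ prodDist μ₀ n x := Finset.prod_nonneg (fun j _ => hμ0 _)
      have hs0 : 0 ≤ ∑ i ∈ Finset.univ.erase i',
          (if ¬ (|prodDist (μ i) n x / prodDist μ₀ n x - 1| ≤ α)
            then prodDist μ₀ n x else 0) :=
        Finset.sum_nonneg (fun i _ => hind0 i x _ h0x)
      have ht1 : 0 ≤ (if ¬ (|prodDist (μ i') n x / prodDist μ₀ n x - 1| ≤ α)
          then prodDist (μ i') n x else 0) := hind0 i' x _ hwx
      by_cases hB : ∀ i : Fin k, |prodDist (μ i) n x / prodDist μ₀ n x - 1| ≤ α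
      · rw [if_neg (not_not_intro hB)]
        linarith
      · rw [if_pos hB]
        by_cases hi' : |prodDist (μ i') n x / prodDist μ₀ n x - 1| ≤ α
        · rw [if_neg (not_not_intro hi')]
          push_neg at hB
          obtain ⟨i0, hi0⟩ := hB
          have hne : i0 ≠ i' := by
            rintro rfl
            exact absurd hi' (not_le.mpr hi0)
          have hWle : prodDist (μ i') n x ≤ 3/2 * prodDist μ₀ n x := by
            by_cases hz : prodDist μ₀ n x = 0
            · have hwz : prodDist (μ i') n x = 0 := by
                unfold prodDist at hz ⊢
                rw [Finset.prod_eq_zero_iff] at hz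
                obtain ⟨j, _, hj⟩ := hz
                exact Finset.prod_eq_zero (Finset.mem_univ j) (hμizero i' _ hj)
              rw [hwz, hz]
              norm_num
            · have h01 : 0 < prodDist μ₀ n x := lt_of_le_of_ne h0x (Ne.symm hz)
              have h2 := (abs_le.mp hi').2
              have h3 : prodDist (μ i') n x / prodDist μ₀ n x ≤ 1 + α := by linarith
              have h4 := (div_le_iff₀ h01).mp h3
              nlinarith only [h4, h01, hα2]
          have hsum1 : prodDist μ₀ n x ≤ ∑ i ∈ Finset.univ.erase i',
              (if ¬ (|prodDist (μ i) n x / prodDist μ₀ n x - 1| ≤ α)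
                then prodDist μ₀ n x else 0) := by
            have h : (if ¬ (|prodDist (μ i0) n x / prodDist μ₀ n x - 1| ≤ α)
                then prodDist μ₀ n x else 0)
                ≤ ∑ i ∈ Finset.univ.erase i',
                  (if ¬ (|prodDist (μ i) n x / prodDist μ₀ n x - 1| ≤ α)
                    then prodDist μ₀ n x else 0) :=
              Finset.single_le_sum (f := fun i => (if ¬ (|prodDist (μ i) n x / prodDist μ₀ n x - 1| ≤ α)
                then prodDist μ₀ n x else 0))
                (fun i _ => hind0 i x _ h0x)
                (Finset.mem_erase.mpr ⟨hne, Finset.mem_univ i0⟩)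
            rw [if_pos (not_le.mpr hi0)] at h
            exact h
          linarith
        · rw [if_pos hi']
          linarith
    calc (∑ x : Fin n → ↥Ω,
          (if ¬ (∀ i : Fin k, |prodDist (μ i) n x / prodDist μ₀ n x - 1| ≤ α)
            then prodDist (μ i') n x else 0))
        ≤ ∑ x : Fin n → ↥Ω,
            ((if ¬ (|prodDist (μ i') n x / prodDist μ₀ n x - 1| ≤ α)
              then prodDist (μ i') n x else 0)
            + (3/2) * ∑ i ∈ Finset.univ.erase i',
                (if ¬ (|prodDist (μ i) n x / prodDist μ₀ n x - 1| ≤ α)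
                  then prodDist μ₀ n x else 0)) := Finset.sum_le_sum (fun x _ => pw x)
      _ = (∑ x : Fin n → ↥Ω, (if ¬ (|prodDist (μ i') n x / prodDist μ₀ n x - 1| ≤ α)
              then prodDist (μ i') n x else 0))
          + (3/2) * ∑ i ∈ Finset.univ.erase i', ∑ x : Fin n → ↥Ω,
              (if ¬ (|prodDist (μ i) n x / prodDist μ₀ n x - 1| ≤ α)
                then prodDist μ₀ n x else 0) := by
          rw [Finset.sum_add_distrib, ← Finset.mul_sum, Finset.sum_comm]
      _ ≤ 2*(E*c) + (3/2) * (((k:ℝ) - 1) * (2*(E*c))) := by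
          have hA := tail i' (μ i') (hμi0 i') (hμisum i') ρ hρ0.le le_rfl
            (hμimean i') (hμizero i')
          have hB : ∑ i ∈ Finset.univ.erase i', (∑ x : Fin n → ↥Ω,
              (if ¬ (|prodDist (μ i) n x / prodDist μ₀ n x - 1| ≤ α)
                then prodDist μ₀ n x else 0))
              ≤ ∑ _i ∈ Finset.univ.erase i', 2*(E*c) :=
            Finset.sum_le_sum (fun i _ =>
              tail i μ₀ hμ0 hμ0sum 0 le_rfl hρ0.le (hmean0 i) (fun y h => h))
          have hC : ∑ _i ∈ Finset.univ.erase i', (2*(E*c)) = ((k:ℝ) - 1) * (2*(E*c)) := by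
            rw [Finset.sum_const, Finset.card_erase_of_mem (Finset.mem_univ i'),
              Finset.card_univ, Fintype.card_fin, nsmul_eq_mul]
            congr 1
            rw [Nat.cast_sub (by omega : 1 ≤ k), Nat.cast_one]
          rw [hC] at hB
          have h32 : (0:ℝ) ≤ 3/2 := by norm_num
          nlinarith only [hA, hB, h32]
      _ ≤ α^2/k := by
          rw [hαk]
          nlinarith only [hEpos, hc12, hcpos, hk2,
            mul_nonneg (mul_nonneg hEpos.le (sub_nonneg.mpr hc12)) (by linarith : (0:ℝ) ≤ (k:ℝ)),
            mul_nonneg hEpos.le (sub_nonneg.mpr hc12)]
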